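/- Let v ∈ S⁰ be real valued, let λ ∈ ℝ, and let (z_j) ⊂ ℝ² be a sequence with |z_j| → ∞ and v(z_j) → λ. Then ∫_{ℝ²} ( v((x,ξ)+z_j) − λ )² · e^{−(x²+ξ²)} dx dξ → 0 as j → ∞. -/

import Mathlib

open Real MeasureTheory Filter Topology

noncomputable section

/-- Partial derivative in the first variable `x`. -/
def pdx (f : ℝ × ℝ → ℝ) : ℝ × ℝ → ℝ := fun p => fderiv ℝ f p (1, 0)

/-- Partial derivative in the second variable `ξ`. -/
def pdxi (f : ℝ × ℝ → ℝ) : ℝ × ℝ → ℝ := fun p => fderiv ℝ f p (0, 1)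

/-- Real valued symbol of order `ρ`. -/
def IsSymbolR (ρ : ℝ) (f : ℝ × ℝ → ℝ) : Prop :=
  ContDiff ℝ (⊤ : ℕ∞) f ∧ ∀ α β : ℕ, ∃ C > 0, ∀ p : ℝ × ℝ,
    |pdx^[α] (pdxi^[β] f) p| ≤ C * (1 + p.1 ^ 2 + p.2 ^ 2) ^ (ρ - ((α : ℝ) + β) / 2)

/-- Let `v ∈ S⁰` be real valued, `λ ∈ ℝ`, and `z_j → ∞` with
`v(z_j) → λ`. Then `∫ (v(·+z_j) − λ)² e^{−(x²+ξ²)} → 0`. -/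
theorem gaussian_average_tendsto_zero (v : ℝ × ℝ → ℝ) (hv : IsSymbolR 0 v)
    (lam : ℝ) (z : ℕ → ℝ × ℝ)
    (hz : Tendsto (fun j => ‖z j‖) atTop atTop)
    (hvz : Tendsto (fun j => v (z j)) atTop (nhds lam)) :
    Tendsto (fun j => ∫ p : ℝ × ℝ,
        (v (p + z j) - lam) ^ 2 * Real.exp (-(p.1 ^ 2 + p.2 ^ 2)))
      atTop (nhds 0) := by
  obtain ⟨hsm, hbd⟩ := hv
  have hcontv : Continuous v := hsm.continuous
  have hdiffv : Differentiable ℝ v := hsm.differentiable (by simp)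
  obtain ⟨M, hM0, hM⟩ := hbd 0 0
  obtain ⟨C1, hC10, hC1⟩ := hbd 1 0
  obtain ⟨C2, hC20, hC2⟩ := hbd 0 1
  simp only [Function.iterate_zero, Function.iterate_one, id, pdx, pdxi] at hM hC1 hC2
  -- simplify the bound on v itself
  have hM' : ∀ p : ℝ × ℝ, |v p| ≤ M := by
    intro p
    have := hM p
    have hpos : (0:ℝ) < 1 + p.1 ^ 2 + p.2 ^ 2 := by positivity
    simpa [Real.rpow_zero] using this
  -- gradient bound
  have hgrad : ∀ q : ℝ × ℝ, ‖fderiv ℝ v q‖ ≤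
      (C1 + C2) * (1 + q.1 ^ 2 + q.2 ^ 2) ^ (-(1/2) : ℝ) := by
    intro q
    have hpos : (0:ℝ) < 1 + q.1 ^ 2 + q.2 ^ 2 := by positivity
    have h1 : |fderiv ℝ v q (1, 0)| ≤ C1 * (1 + q.1 ^ 2 + q.2 ^ 2) ^ (-(1/2) : ℝ) := by
      have := hC1 q
      norm_num at this ⊢
      exact this
    have h2 : |fderiv ℝ v q (0, 1)| ≤ C2 * (1 + q.1 ^ 2 + q.2 ^ 2) ^ (-(1/2) : ℝ) := by
      have := hC2 q
      norm_num at this ⊢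
      exact this
    apply ContinuousLinearMap.opNorm_le_bound _ (by positivity)
    rintro ⟨a, b⟩
    have hw : ((a, b) : ℝ × ℝ) = a • ((1:ℝ), (0:ℝ)) + b • ((0:ℝ), (1:ℝ)) := by
      ext <;> simp
    have hw1 : |a| ≤ ‖((a, b) : ℝ × ℝ)‖ := norm_fst_le ((a, b) : ℝ × ℝ)
    have hw2 : |b| ≤ ‖((a, b) : ℝ × ℝ)‖ := norm_snd_le ((a, b) : ℝ × ℝ)
    calc ‖fderiv ℝ v q (a, b)‖
        = ‖a • fderiv ℝ v q (1, 0) + b • fderiv ℝ v q (0, 1)‖ := by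
          rw [hw, map_add, (fderiv ℝ v q).map_smul, (fderiv ℝ v q).map_smul]
      _ ≤ |a| * |fderiv ℝ v q (1, 0)| + |b| * |fderiv ℝ v q (0, 1)| := by
          refine (norm_add_le _ _).trans ?_
          simp [abs_mul]
      _ ≤ ‖((a, b) : ℝ × ℝ)‖ * (C1 * (1 + q.1 ^ 2 + q.2 ^ 2) ^ (-(1/2) : ℝ))
          + ‖((a, b) : ℝ × ℝ)‖ * (C2 * (1 + q.1 ^ 2 + q.2 ^ 2) ^ (-(1/2) : ℝ)) :=
          add_le_add (mul_le_mul hw1 h1 (abs_nonneg _) (norm_nonneg _))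
            (mul_le_mul hw2 h2 (abs_nonneg _) (norm_nonneg _))
      _ = (C1 + C2) * (1 + q.1 ^ 2 + q.2 ^ 2) ^ (-(1/2) : ℝ) * ‖((a, b) : ℝ × ℝ)‖ := by
          ring
  -- mean value estimate
  have key : ∀ (p zj : ℝ × ℝ), ‖p‖ ≤ ‖zj‖ →
      |v (p + zj) - v zj| ≤
        (C1 + C2) * (1 + (‖zj‖ - ‖p‖) ^ 2) ^ (-(1/2) : ℝ) * ‖p‖ := by
    intro p zj hle
    set B := (C1 + C2) * (1 + (‖zj‖ - ‖p‖) ^ 2) ^ (-(1/2) : ℝ) with hB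
    have hbound : ∀ q ∈ Metric.closedBall zj ‖p‖, ‖fderiv ℝ v q‖ ≤ B := by
      intro q hq
      refine (hgrad q).trans ?_
      rw [hB]
      apply mul_le_mul_of_nonneg_left _ (by positivity : (0:ℝ) ≤ C1 + C2)
      have hposa : (0:ℝ) < 1 + (‖zj‖ - ‖p‖) ^ 2 := by positivity
      apply Real.rpow_le_rpow_of_nonpos hposa _ (by norm_num)
      have hqz : ‖q - zj‖ ≤ ‖p‖ := by
        rw [Metric.mem_closedBall] at hq
        simpa [dist_eq_norm] using hq
      have hqn : ‖zj‖ - ‖p‖ ≤ ‖q‖ := by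
        have := norm_sub_norm_le zj q
        have h' : ‖zj - q‖ ≤ ‖p‖ := by rwa [norm_sub_rev] at hqz
        linarith
      have hqn0 : 0 ≤ ‖zj‖ - ‖p‖ := by linarith
      have hsq : (‖zj‖ - ‖p‖) ^ 2 ≤ ‖q‖ ^ 2 := by
        exact pow_le_pow_left₀ hqn0 hqn 2
      have hqq : ‖q‖ ^ 2 ≤ q.1 ^ 2 + q.2 ^ 2 := by
        have : ‖q‖ = max ‖q.1‖ ‖q.2‖ := rfl
        rw [this]
        rcases max_cases ‖q.1‖ ‖q.2‖ with ⟨h, _⟩ | ⟨h, _⟩ <;> rw [h] <;>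
          simp [Real.norm_eq_abs, sq_abs] <;> positivity
      linarith
    have hmem1 : zj ∈ Metric.closedBall zj ‖p‖ := by
      simp [Metric.mem_closedBall]
    have hmem2 : p + zj ∈ Metric.closedBall zj ‖p‖ := by
      simp [Metric.mem_closedBall, dist_eq_norm]
    have := (convex_closedBall zj ‖p‖).norm_image_sub_le_of_norm_fderiv_le
      (fun q _ => hdiffv.differentiableAt) hbound hmem1 hmem2
    simpa [Real.norm_eq_abs, add_sub_cancel_right] using this
  -- pointwise limit
  have hpt : ∀ p : ℝ × ℝ, Tendsto (fun j => v (p + z j)) atTop (nhds lam) := by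
    intro p
    have hzero : Tendsto (fun j => v (p + z j) - v (z j)) atTop (nhds 0) := by
      apply squeeze_zero_norm'
        (a := fun j => (C1 + C2) * (1 + (‖z j‖ - ‖p‖) ^ 2) ^ (-(1/2) : ℝ) * ‖p‖)
      · filter_upwards [hz.eventually_ge_atTop ‖p‖] with j hj
        simpa [Real.norm_eq_abs] using key p (z j) hj
      · have h1 : Tendsto (fun j => ‖z j‖ - ‖p‖) atTop atTop :=
          tendsto_atTop_add_const_right _ (-‖p‖) hz
        have h2 : Tendsto (fun j => 1 + (‖z j‖ - ‖p‖) ^ 2) atTop atTop := by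
          apply tendsto_atTop_add_const_left
          simpa [sq] using h1.atTop_mul_atTop₀ h1
        have h3 : Tendsto (fun j => (1 + (‖z j‖ - ‖p‖) ^ 2) ^ (-(1/2) : ℝ))
            atTop (nhds 0) :=
          (tendsto_rpow_neg_atTop (by norm_num : (0:ℝ) < 1/2)).comp h2
        simpa using (h3.const_mul (C1 + C2)).mul_const ‖p‖
    have := hzero.add hvz
    simpa using this
  -- dominated convergence
  have hexp : Integrable (fun x : ℝ => Real.exp (-x ^ 2)) := by
    simpa using integrable_exp_neg_mul_sq (one_pos)
  have hint : Integrable (fun p : ℝ × ℝ => Real.exp (-p.1 ^ 2) * Real.exp (-p.2 ^ 2)) :=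
    hexp.mul_prod hexp
  have hbdd : Integrable
      (fun p : ℝ × ℝ => (M + |lam|) ^ 2 * (Real.exp (-p.1 ^ 2) * Real.exp (-p.2 ^ 2))) :=
    hint.const_mul _
  have hmain := tendsto_integral_of_dominated_convergence
    (μ := (volume : Measure (ℝ × ℝ)))
    (F := fun j p => (v (p + z j) - lam) ^ 2 * Real.exp (-(p.1 ^ 2 + p.2 ^ 2)))
    (f := fun _ => (0:ℝ))
    (fun p => (M + |lam|) ^ 2 * (Real.exp (-p.1 ^ 2) * Real.exp (-p.2 ^ 2)))
    (fun j => by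
      apply Continuous.aestronglyMeasurable
      exact (((hcontv.comp (continuous_id.add continuous_const)).sub
        continuous_const).pow 2).mul
        (((continuous_fst.pow 2).add (continuous_snd.pow 2)).neg.rexp))
    hbdd
    (fun j => by
      filter_upwards with p
      have h1 : |v (p + z j) - lam| ≤ M + |lam| :=
        (abs_sub _ _).trans (by have := hM' (p + z j); linarith)
      have h2 : (v (p + z j) - lam) ^ 2 ≤ (M + |lam|) ^ 2 := by
        rw [← sq_abs]
        exact pow_le_pow_left₀ (abs_nonneg _) h1 2
      have hexpeq : Real.exp (-(p.1 ^ 2 + p.2 ^ 2))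
          = Real.exp (-p.1 ^ 2) * Real.exp (-p.2 ^ 2) := by
        rw [← Real.exp_add]; ring_nf
      rw [Real.norm_eq_abs, abs_of_nonneg (by positivity), hexpeq]
      exact mul_le_mul_of_nonneg_right h2 (by positivity))
    (by
      filter_upwards with p
      have := ((hpt p).sub_const lam).pow 2 |>.mul_const (Real.exp (-(p.1 ^ 2 + p.2 ^ 2)))
      simpa using this)
  simpa using hmain
end
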